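/- arXiv:2404.06815 — 2 statements merged into one kernel-verified Lean document; each statement's English description precedes it below -/
import Mathlib

section
/- Let H_0 be an (n−k)×m parity-check matrix over F_{q^m} of the Gabidulin code Gab(h_0, k) where h_0 in F_{q^m}^m has rank weight m, and let the public code C_pub be generated by G_pub = S·G·Q^{-1} with S invertible, G a Moore generator matrix of Gab(g,k), g of rank weight n, and Q in GL_n(V) for an F_q-subspace V containing 1, γ^2, γ^{-2}. Then there exist at least q^m − 1 full-rank matrices M in V^{m×n} such that H_0·M is a parity-check matrix of C_pub, i.e., G_pub·M^T·H_0^T = 0. -/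
/-!
Comparing dimensions, `ker H₀ = Gab(h₀, k)` has dimension at most `k` while `H₀` has `n - k`
rows, so `m ≤ n`; hence `m = n` and both `g` and `h₀` are `F_q`-bases of `F_{q^m}`.
For a unit `α`, let `A_α` be the `F_q`-matrix of `x ↦ α x` from the basis `h₀` to the basis `g`.
Since `x ↦ x ^ q ^ i` is `F_q`-linear, `G · A_α` is the Moore matrix of `α • h₀`, whose rows
`α ^ q ^ i • h₀ ^ q ^ i` lie in `Gab(h₀, k)`. So `M_α = (Q · A_α)ᵀ` satisfies
`G_pub · M_αᵀ · H₀ᵀ = S · G · A_α · H₀ᵀ = 0`; its entries are `F_q`-combinations of entries of `Q`,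
it is invertible, and `α ↦ M_α` is injective on the `q ^ m - 1` units.
-/

open Matrix

noncomputable section

/-- The `k × n` Moore matrix generated by `g`, with `(i,j)` entry `g j ^ q ^ i`. -/
def moore (q k n : ℕ) {K : Type*} [Field K] (g : Fin n → K) : Matrix (Fin k) (Fin n) K :=
  fun i j => g j ^ q ^ (i : ℕ)

/-- The Gabidulin code `Gab(g, k)`: the row span over `K` of the Moore matrix of `g`. -/
def gab (q k n : ℕ) {K : Type*} [Field K] (g : Fin n → K) : Submodule K (Fin n → K) :=
  Submodule.span K (Set.range (moore q k n g))

/-- The rank weight of a vector: the `Fq`-dimension of the span of its entries. -/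
def rankWt (Fq : Type*) [Field Fq] {K : Type*} [Field K] [Algebra Fq K] {n : ℕ}
    (x : Fin n → K) : ℕ :=
  Module.finrank Fq (Submodule.span Fq (Set.range x))

/-- The rank weight of a matrix: the `Fq`-dimension of the span of all its entries. -/
def matRankWt (Fq : Type*) [Field Fq] {K : Type*} [Field K] [Algebra Fq K] {r c : ℕ}
    (A : Matrix (Fin r) (Fin c) K) : ℕ :=
  Module.finrank Fq (Submodule.span Fq {x : K | ∃ i j, A i j = x})

theorem moore_mul_map_algebraMap {Fq K : Type*} [Field Fq] [Fintype Fq] [Field K] [Algebra Fq K]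
    {k n m : ℕ} (g : Fin n → K) (A : Matrix (Fin n) (Fin m) Fq) :
    moore (Fintype.card Fq) k n g * A.map (algebraMap Fq K) =
      moore (Fintype.card Fq) k m (fun l => ∑ j, A j l • g j) := by
  ext i l
  have hfrob : ∀ x : K,
      x ^ Fintype.card Fq ^ (i : ℕ) = (FiniteField.frobeniusAlgHom Fq K ^ (i : ℕ)) x := by
    intro x
    rw [AlgHom.coe_pow, FiniteField.coe_frobeniusAlgHom, pow_iterate]
  simp only [moore, mul_apply, map_apply, hfrob, map_sum, Algebra.smul_def, map_mul,
    AlgHom.commutes, mul_comm]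

theorem moore_smul_mul_transpose_eq_zero {q k m r : ℕ} {K : Type*} [Field K] {h : Fin m → K}
    {H : Matrix (Fin r) (Fin m) K} (hH : ∀ c, c ∈ gab q k m h ↔ H *ᵥ c = 0) (α : K) :
    moore q k m (α • h) * Hᵀ = 0 := by
  ext i j
  have hrow : moore q k m (α • h) i = α ^ q ^ (i : ℕ) • moore q k m h i := by
    ext l
    simp [moore, mul_pow]
  have hker : H *ᵥ moore q k m (α • h) i = 0 :=
    (hH _).1 (hrow ▸ Submodule.smul_mem _ _ (Submodule.subset_span ⟨i, rfl⟩))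
  simpa [mulVec, dotProduct, mul_apply, mul_comm] using congrFun hker j

theorem le_add_of_ker_mulVecLin_eq_span {K : Type*} [Field K] {r m k : ℕ}
    (H : Matrix (Fin r) (Fin m) K) (v : Fin k → Fin m → K)
    (h : LinearMap.ker H.mulVecLin = Submodule.span K (Set.range v)) : m ≤ r + k := by
  have hrank := LinearMap.finrank_range_add_finrank_ker H.mulVecLin
  have hrange : Module.finrank K (LinearMap.range H.mulVecLin) ≤ r :=
    (Submodule.finrank_le _).trans_eq (Module.finrank_fin_fun K)
  have hker : Module.finrank K (LinearMap.ker H.mulVecLin) ≤ k :=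
    h ▸ (finrank_range_le_card (R := K) v).trans_eq (Fintype.card_fin k)
  simp only [Module.finrank_fin_fun] at hrank
  omega

theorem exists_basis_coe_eq_of_rankWt_eq {Fq K : Type*} [Field Fq] [Field K] [Algebra Fq K]
    [FiniteDimensional Fq K] {n : ℕ} {g : Fin n → K} (hg : rankWt Fq g = n)
    (hK : Module.finrank Fq K = n) :
    ∃ b : Module.Basis (Fin n) Fq K, ⇑b = g := by
  have hli : LinearIndependent Fq g := by
    rw [linearIndependent_iff_card_eq_finrank_span, Fintype.card_fin]
    exact hg.symm
  exact ⟨basisOfLinearIndependentOfCardEqFinrank' g hli (by simp [hK]),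
    coe_basisOfLinearIndependentOfCardEqFinrank' _ _ _⟩

section MulLeftMatrix

variable {Fq K : Type*} [Field Fq] [Field K] [Algebra Fq K] {n : ℕ}

def mulLeftMatrix (b b' : Module.Basis (Fin n) Fq K) (α : Kˣ) : Matrix (Fin n) (Fin n) K :=
  (LinearMap.toMatrix b b' (Units.mulLeftLinearEquiv Fq K α : K →ₗ[Fq] K)).map (algebraMap Fq K)

variable (b b' : Module.Basis (Fin n) Fq K)

theorem moore_mul_mulLeftMatrix [Fintype Fq] (k : ℕ) (α : Kˣ) :
    moore (Fintype.card Fq) k n b' * mulLeftMatrix b b' α =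
      moore (Fintype.card Fq) k n ((α : K) • ⇑b) := by
  rw [mulLeftMatrix, moore_mul_map_algebraMap]
  congr 1
  funext l
  simp [LinearMap.toMatrix_apply, Module.Basis.sum_repr]

theorem isUnit_mulLeftMatrix (α : Kˣ) : IsUnit (mulLeftMatrix b b' α) := by
  rw [isUnit_iff_isUnit_det, mulLeftMatrix, ← RingHom.mapMatrix_apply, ← RingHom.map_det]
  exact (LinearEquiv.isUnit_det _ b b').map _

theorem mulLeftMatrix_injective : Function.Injective (mulLeftMatrix b b') := by
  intro α β h
  have h' := Matrix.map_injective (algebraMap Fq K).injective h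
  have := LinearMap.congr_fun ((LinearMap.toMatrix b b').injective h') 1
  simpa [Units.ext_iff] using this

theorem mul_mulLeftMatrix_mem {V : Submodule Fq K} {Q : Matrix (Fin n) (Fin n) K}
    (hQV : ∀ i j, Q i j ∈ V) (α : Kˣ) (i j : Fin n) : (Q * mulLeftMatrix b b' α) i j ∈ V := by
  simp only [mul_apply, mulLeftMatrix, map_apply]
  exact Submodule.sum_mem _ fun s _ => by
    rw [mul_comm, ← Algebra.smul_def]; exact Submodule.smul_mem _ _ (hQV i s)

theorem moore_mul_inv_mul_mulLeftMatrix_mul_transpose_eq_zero [Fintype Fq] {k r : ℕ}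
    {Q : Matrix (Fin n) (Fin n) K} (hQ : IsUnit Q) (S : Matrix (Fin k) (Fin k) K)
    {H : Matrix (Fin r) (Fin n) K} (hH : ∀ c, c ∈ gab (Fintype.card Fq) k n b ↔ H *ᵥ c = 0)
    (α : Kˣ) :
    S * moore (Fintype.card Fq) k n b' * Q⁻¹ * (Q * mulLeftMatrix b b' α) * Hᵀ = 0 := by
  have hQQ : Q⁻¹ * (Q * mulLeftMatrix b b' α) = mulLeftMatrix b b' α :=
    nonsing_inv_mul_cancel_left _ _ ((isUnit_iff_isUnit_det Q).1 hQ)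
  calc S * moore (Fintype.card Fq) k n b' * Q⁻¹ * (Q * mulLeftMatrix b b' α) * Hᵀ
      = S * (moore (Fintype.card Fq) k n b' * (Q⁻¹ * (Q * mulLeftMatrix b b' α)) * Hᵀ) := by
        simp only [Matrix.mul_assoc]
    _ = S * (moore (Fintype.card Fq) k n ((α : K) • ⇑b) * Hᵀ) := by
        rw [hQQ, moore_mul_mulLeftMatrix]
    _ = 0 := by rw [moore_smul_mul_transpose_eq_zero hH, Matrix.mul_zero]

end MulLeftMatrix

theorem stmt11_general {q m n k : ℕ}
    {Fq K : Type*} [Field Fq] [Field K] [Algebra Fq K] [Fintype Fq]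
    (hFq : Fintype.card Fq = q) (hm : Module.finrank Fq K = m)
    (hkn : k < n) (hnm : n ≤ m)
    (V : Submodule Fq K)
    (g : Fin n → K) (hg : rankWt Fq g = n)
    (S : Matrix (Fin k) (Fin k) K)
    (Q : Matrix (Fin n) (Fin n) K) (hQ : IsUnit Q) (hQV : ∀ i j, Q i j ∈ V)
    (Gpub : Matrix (Fin k) (Fin n) K) (hGpub : Gpub = S * moore q k n g * Q⁻¹)
    (h0 : Fin m → K) (hh0 : rankWt Fq h0 = m)
    (H0 : Matrix (Fin (n - k)) (Fin m) K)
    (hH0 : ∀ c : Fin m → K, c ∈ gab q k m h0 ↔ H0.mulVec c = 0) :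
    q ^ m - 1 ≤ Set.ncard {M : Matrix (Fin m) (Fin n) K |
      (∀ i j, M i j ∈ V) ∧ M.rank = n ∧ Gpub * M.transpose * H0.transpose = 0} := by
  have hmn : m = n := by
    have := le_add_of_ker_mulVecLin_eq_span H0 _ (by ext c; exact (hH0 c).symm)
    omega
  subst hmn hFq
  have : FiniteDimensional Fq K := Module.finite_of_finrank_pos (by omega)
  have : Finite K := Module.finite_of_finite Fq
  obtain ⟨bg, rfl⟩ := exists_basis_coe_eq_of_rankWt_eq hg hm
  obtain ⟨bh, rfl⟩ := exists_basis_coe_eq_of_rankWt_eq hh0 hm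
  let M : Kˣ → Matrix (Fin m) (Fin m) K := fun α => (Q * mulLeftMatrix bh bg α)ᵀ
  have hM_inj : Function.Injective M := fun α β h =>
    mulLeftMatrix_injective bh bg (hQ.mul_left_cancel (transpose_injective h))
  have hM_mem : Set.range M ⊆ {M : Matrix (Fin m) (Fin m) K |
      (∀ i j, M i j ∈ V) ∧ M.rank = m ∧ Gpub * M.transpose * H0.transpose = 0} := by
    rintro _ ⟨α, rfl⟩
    refine ⟨fun i j => mul_mulLeftMatrix_mem bh bg hQV α j i, ?_, ?_⟩
    · rw [rank_transpose, rank_of_isUnit _ (hQ.mul (isUnit_mulLeftMatrix bh bg α)),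
        Fintype.card_fin]
    · rw [transpose_transpose, hGpub]
      exact moore_mul_inv_mul_mulLeftMatrix_mul_transpose_eq_zero bh bg hQ S hH0 α
  calc Fintype.card Fq ^ m - 1 = Nat.card Kˣ := by
        rw [Nat.card_units, Module.natCard_eq_pow_finrank (K := Fq), Nat.card_eq_fintype_card, hm]
    _ = (Set.range M).ncard := (Set.ncard_range_of_injective hM_inj).symm
    _ ≤ _ := Set.ncard_le_ncard hM_mem (Set.toFinite _)

/-- With `H₀` a parity-check matrix of `Gab(h₀, k)` (`h₀` of rank weight
`m`), and the public code generated by `G_pub = S·G·Q⁻¹` (`S` invertible, `G` the Moore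
matrix of `g` of rank weight `n`, `Q ∈ GL_n(V)` for `V = span_{F_q}{1, γ², γ⁻²}`), there
are at least `q^m - 1` full-rank matrices `M ∈ V^{m×n}` with `G_pub·Mᵀ·H₀ᵀ = 0`. -/
theorem stmt11 {p q e m n k : ℕ} [Fact p.Prime] (hq : q = p ^ e)
    {Fq K : Type*} [Field Fq] [Field K] [Algebra Fq K] [Fintype Fq] [CharP K p]
    (hFq : Fintype.card Fq = q) (hm : Module.finrank Fq K = m)
    (hkn : k < n) (hnm : n ≤ m)
    (γ : K) (hγ : γ ≠ 0)
    (V : Submodule Fq K) (hV : V = Submodule.span Fq ({1, γ ^ 2, γ⁻¹ ^ 2} : Set K))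
    (g : Fin n → K) (hg : rankWt Fq g = n)
    (S : Matrix (Fin k) (Fin k) K) (hS : IsUnit S)
    (Q : Matrix (Fin n) (Fin n) K) (hQ : IsUnit Q) (hQV : ∀ i j, Q i j ∈ V)
    (Gpub : Matrix (Fin k) (Fin n) K) (hGpub : Gpub = S * moore q k n g * Q⁻¹)
    (h0 : Fin m → K) (hh0 : rankWt Fq h0 = m)
    (H0 : Matrix (Fin (n - k)) (Fin m) K)
    (hH0 : ∀ c : Fin m → K, c ∈ gab q k m h0 ↔ H0.mulVec c = 0) :
    q ^ m - 1 ≤ Set.ncard {M : Matrix (Fin m) (Fin n) K |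
      (∀ i j, M i j ∈ V) ∧ M.rank = n ∧ Gpub * M.transpose * H0.transpose = 0} :=
  stmt11_general hFq hm hkn hnm V g hg S Q hQ hQV Gpub hGpub h0 hh0 H0 hH0
end
end

section
/- Let ℓ divide m and let C be a linear code over F_{q^m} with generator matrix G_pub = S·G·Q^{-1}, where S ∈ GL_k(F_{q^m}), G is the k×n Moore matrix of a vector g of rank weight n with ℓ < min{k, n−k}, and Q^{-1} ∈ GL_n(F_{q^ℓ}). Then dim(C + C^{[ℓ]}) = k + ℓ, where C^{[ℓ]} is the code generated by the entrywise q^ℓ-th power of G_pub. -/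
open Matrix

noncomputable section

theorem moore_li {p q e n r : ℕ} [Fact p.Prime] (hq : q = p ^ e)
    {Fq K : Type*} [Field Fq] [Field K] [Algebra Fq K] [Fintype Fq] [CharP K p]
    (hFq : Fintype.card Fq = q) (hr : r ≤ n) (hr0 : 0 < r)
    (g : Fin n → K) (hg : rankWt Fq g = n) :
    LinearIndependent K (moore q r n g) := by
  have hq2 : 1 < q := hFq ▸ Fintype.one_lt_card
  have hqpos : 0 < q := lt_trans Nat.zero_lt_one hq2
  refine Fintype.linearIndependent_iff.mpr ?_
  classical
  intro c hc i0
  set P : Polynomial K := ∑ i : Fin r, Polynomial.C (c i) * Polynomial.X ^ (q ^ (i : ℕ)) with hP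
  have hevalx : ∀ x : K, Polynomial.eval x P = ∑ i : Fin r, c i * x ^ q ^ (i : ℕ) := by
    intro x
    rw [hP, Polynomial.eval_finset_sum]
    simp
  have hroot_g : ∀ j, Polynomial.eval (g j) P = 0 := by
    intro j
    rw [hevalx]
    have := congrFun hc j
    simpa [moore, Finset.sum_apply] using this
  have hpowsplit : ∀ (i : Fin r) (x y : K),
      (x + y) ^ q ^ (i : ℕ) = x ^ q ^ (i : ℕ) + y ^ q ^ (i : ℕ) := by
    intro i x y
    rw [hq, ← pow_mul]
    rw [add_pow_char_pow]
  have hadd : ∀ x y : K,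
      Polynomial.eval (x + y) P = Polynomial.eval x P + Polynomial.eval y P := by
    intro x y
    simp only [hevalx]
    rw [← Finset.sum_add_distrib]
    apply Finset.sum_congr rfl
    intro i _
    rw [hpowsplit i x y]
    ring
  have halg : ∀ (a : Fq) (i : Fin r),
      (algebraMap Fq K a) ^ q ^ (i : ℕ) = algebraMap Fq K a := by
    intro a i
    rw [← map_pow]
    congr 1
    have := FiniteField.pow_card_pow (i : ℕ) a
    rwa [hFq] at this
  have hroots : ∀ x ∈ Submodule.span Fq (Set.range g), Polynomial.eval x P = 0 := by
    intro x hx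
    induction hx using Submodule.span_induction with
    | mem x hx =>
      obtain ⟨j, rfl⟩ := hx
      exact hroot_g j
    | zero =>
      rw [hevalx]
      apply Finset.sum_eq_zero
      intro i _
      rw [zero_pow (by positivity), mul_zero]
    | add x y hx hy ihx ihy => rw [hadd, ihx, ihy, add_zero]
    | smul a x hx ih =>
      rw [Algebra.smul_def, hevalx]
      have : ∀ i : Fin r, c i * (algebraMap Fq K a * x) ^ q ^ (i : ℕ)
          = algebraMap Fq K a * (c i * x ^ q ^ (i : ℕ)) := by
        intro i
        rw [mul_pow, halg a i]
        ring
      rw [Finset.sum_congr rfl (fun i _ => this i), ← Finset.mul_sum, ← hevalx, ih, mul_zero]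
  have hP0 : P = 0 := by
    by_contra hP0
    set W : Submodule Fq K := Submodule.span Fq (Set.range g) with hW
    haveI : FiniteDimensional Fq W := FiniteDimensional.span_of_finite Fq (Set.finite_range g)
    haveI : Finite W := Module.finite_of_finite Fq
    haveI : Fintype W := Fintype.ofFinite W
    have hcard : Fintype.card W = q ^ n := by
      rw [Module.card_eq_pow_finrank (K := Fq), hFq]
      exact congrArg (fun t => q ^ t) hg
    have hinj : Fintype.card W ≤ P.roots.toFinset.card := by
      have := Fintype.card_le_of_injective
        (fun x : W => (⟨(x : K), by
          rw [Multiset.mem_toFinset, Polynomial.mem_roots']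
          exact ⟨hP0, hroots x x.2⟩⟩ : {y // y ∈ P.roots.toFinset}))
        (fun x y hxy => Subtype.ext (by simpa using congrArg Subtype.val hxy))
      simpa [Fintype.card_coe] using this
    have hle : q ^ n ≤ P.natDegree := by
      calc q ^ n = Fintype.card W := hcard.symm
        _ ≤ P.roots.toFinset.card := hinj
        _ ≤ Multiset.card P.roots := Multiset.toFinset_card_le _
        _ ≤ P.natDegree := Polynomial.card_roots' P
    have hdeg : P.natDegree ≤ q ^ (n - 1) := by
      rw [hP]
      apply Polynomial.natDegree_sum_le_of_forall_le
      intro i _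
      apply le_trans (Polynomial.natDegree_mul_le)
      simp only [Polynomial.natDegree_C, Polynomial.natDegree_X_pow, zero_add]
      exact Nat.pow_le_pow_right hqpos (by omega)
    have : q ^ n < q ^ n :=
      lt_of_le_of_lt (le_trans hle hdeg) (Nat.pow_lt_pow_right hq2 (by omega))
    exact absurd this (lt_irrefl _)
  have hcoeff := congrArg (fun R => Polynomial.coeff R (q ^ (i0 : ℕ))) hP0
  simp only [hP, Polynomial.finset_sum_coeff, Polynomial.coeff_C_mul,
    Polynomial.coeff_X_pow, Polynomial.coeff_zero] at hcoeff
  rw [Finset.sum_eq_single i0] at hcoeff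
  · simpa using hcoeff
  · intro i _ hi
    rw [if_neg, mul_zero]
    intro h
    exact hi (Fin.ext (Nat.pow_right_injective hq2 h.symm))
  · intro h
    exact absurd (Finset.mem_univ i0) h

theorem span_mul_eq_map {u v n : ℕ} {K : Type*} [Field K]
    (C : Matrix (Fin u) (Fin v) K) (D : Matrix (Fin v) (Fin n) K) :
    Submodule.span K (Set.range (C * D)) =
      Submodule.map D.vecMulLinear (Submodule.span K (Set.range C)) := by
  rw [← Submodule.span_image]
  congr 1
  change Set.range (fun i => (C * D) i) = ⇑D.vecMulLinear '' Set.range (fun i => C i)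
  rw [← Set.range_comp]
  apply congrArg Set.range
  funext i
  funext j
  simp [Matrix.mul_apply, Matrix.vecMulLinear_apply, Matrix.vecMul, dotProduct]

theorem span_unit_mul {a n : ℕ} {K : Type*} [Field K] (A : Matrix (Fin a) (Fin a) K)
    (hA : IsUnit A) (B : Matrix (Fin a) (Fin n) K) :
    Submodule.span K (Set.range (A * B)) = Submodule.span K (Set.range B) := by
  rw [span_mul_eq_map]
  have htop : Submodule.span K (Set.range A) = ⊤ := by
    change Submodule.span K (Set.range A.row) = ⊤
    rw [← range_vecMulLinear, LinearMap.range_eq_top]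
    intro w
    refine ⟨w ᵥ* A⁻¹, ?_⟩
    rw [Matrix.vecMulLinear_apply, Matrix.vecMul_vecMul,
      Matrix.nonsing_inv_mul A ((Matrix.isUnit_iff_isUnit_det A).mp hA), Matrix.vecMul_one]
  rw [htop, Submodule.map_top, range_vecMulLinear]
  rfl

/-- With `ℓ ∣ m`, `ℓ < min{k, n-k}`, `G_pub = S·G·Q⁻¹` where `G` is the
Moore matrix of `g` of rank weight `n` and `Q⁻¹ ∈ GL_n(F_{q^ℓ})` (its entries are fixed
by `x ↦ x^{q^ℓ}`), the code `C` generated by `G_pub` satisfies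
`dim(C + C^{[ℓ]}) = k + ℓ`. -/
theorem stmt15 {p q e m n k ℓ : ℕ} [Fact p.Prime] (hq : q = p ^ e)
    {Fq K : Type*} [Field Fq] [Field K] [Algebra Fq K] [Fintype Fq] [CharP K p]
    (hFq : Fintype.card Fq = q) (hm : Module.finrank Fq K = m)
    (hl : ℓ ∣ m) (hlk : ℓ < k) (hlnk : ℓ < n - k) (hkn : k ≤ n) (hnm : n ≤ m)
    (g : Fin n → K) (hg : rankWt Fq g = n)
    (S : Matrix (Fin k) (Fin k) K) (hS : IsUnit S)
    (Q : Matrix (Fin n) (Fin n) K) (hQ : IsUnit Q)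
    (hQl : ∀ i j, (Q⁻¹) i j ^ q ^ ℓ = (Q⁻¹) i j)
    (Gpub : Matrix (Fin k) (Fin n) K) (hGpub : Gpub = S * moore q k n g * Q⁻¹) :
    Module.finrank K
      ↥(Submodule.span K (Set.range Gpub) ⊔
        Submodule.span K (Set.range (Gpub.map (fun x => x ^ q ^ ℓ)))) = k + ℓ := by
  classical
  have hq2 : 1 < q := hFq ▸ Fintype.one_lt_card
  haveI : ExpChar K p := ExpChar.prime Fact.out
  set φ : K →+* K := iterateFrobenius K p (e * ℓ) with hφdef
  have hφ : ∀ x : K, φ x = x ^ q ^ ℓ := by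
    intro x
    rw [hφdef, iterateFrobenius_def, hq, ← pow_mul]
  have hmapφ : Gpub.map (fun x => x ^ q ^ ℓ) = Gpub.map φ := by
    ext i j
    rw [Matrix.map_apply, Matrix.map_apply, hφ]
  have hQinv : (Q⁻¹).map φ = Q⁻¹ := by
    ext i j
    rw [Matrix.map_apply, hφ, hQl]
  have hSφ : IsUnit (S.map φ) := by
    rw [Matrix.isUnit_iff_isUnit_det] at hS ⊢
    have hdet : (S.map φ).det = φ S.det := by
      rw [RingHom.map_det, RingHom.mapMatrix_apply]
    rw [hdet]
    exact hS.map φ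
  have hGm : Gpub.map φ = (S.map φ) * ((moore q k n g).map φ) * Q⁻¹ := by
    rw [hGpub, Matrix.map_mul, Matrix.map_mul, hQinv]
  have hkl : k + ℓ ≤ n := by omega
  set M := moore q (k + ℓ) n g with hM
  have hrangeU : Set.range (moore q k n g) ∪ Set.range ((moore q k n g).map φ)
      = Set.range M := by
    ext x
    constructor
    · rintro (⟨i, rfl⟩ | ⟨i, rfl⟩)
      · exact ⟨⟨i, by omega⟩, rfl⟩
      · refine ⟨⟨(i : ℕ) + ℓ, by omega⟩, ?_⟩
        funext j
        simp only [hM, moore, Matrix.map_apply, hφ]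
        rw [← pow_mul, ← pow_add]
    · rintro ⟨i, rfl⟩
      by_cases hi : (i : ℕ) < k
      · exact Or.inl ⟨⟨i, hi⟩, rfl⟩
      · refine Or.inr ⟨⟨(i : ℕ) - ℓ, by omega⟩, ?_⟩
        funext j
        simp only [hM, moore, Matrix.map_apply, hφ]
        rw [← pow_mul, ← pow_add]
        congr 2
        omega
  rw [hmapφ, hGm, hGpub, Matrix.mul_assoc, Matrix.mul_assoc, span_unit_mul S hS, span_unit_mul (S.map φ) hSφ,
    span_mul_eq_map, span_mul_eq_map, ← Submodule.map_sup, ← Submodule.span_union, hrangeU]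
  have hinj : Function.Injective (Matrix.vecMulLinear Q⁻¹) := by
    intro v w hvw
    have h2 := congrArg (fun u => u ᵥ* Q) hvw
    simpa [Matrix.vecMulLinear_apply, Matrix.vecMul_vecMul,
      Matrix.nonsing_inv_mul Q ((Matrix.isUnit_iff_isUnit_det Q).mp hQ),
      Matrix.vecMul_one] using h2
  rw [← LinearEquiv.finrank_eq
    (Submodule.equivMapOfInjective _ hinj (Submodule.span K (Set.range M)))]
  have hli := moore_li hq hFq hkl (by omega) g hg
  rw [finrank_span_eq_card hli, Fintype.card_fin]
end
end
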